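/- arXiv:1904.06913 — 3 statements merged into one kernel-verified Lean document; each statement's English description precedes it below -/
import Mathlib

section
/- If f is strictly convex at 1 and D_f(p‖q) = 0, then p = q almost everywhere. -/
open MeasureTheory Real

/-- If `f` is strictly convex at `1` (i.e. `f t > 0` for `t ≠ 1`) and
`D_f(p‖q) = 0`, then `p = q` almost everywhere. -/
theorem ae_eq_of_f_divergence_eq_zero {χ : Type*} [MeasurableSpace χ] (μ : Measure χ)
    (p q : χ → ℝ) (f : ℝ → ℝ)
    (hp_meas : Measurable p) (hq_meas : Measurable q)
    (hp_nonneg : ∀ x, 0 ≤ p x) (hq_nonneg : ∀ x, 0 ≤ q x)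
    (hp_int : Integrable p μ) (hq_int : Integrable q μ)
    (hp_one : ∫ x, p x ∂μ = 1) (hq_one : ∫ x, q x ∂μ = 1)
    (hq_pos : ∀ᵐ x ∂μ, 0 < q x)
    (hf_conv : ConvexOn ℝ Set.univ f) (hf_one : f 1 = 0)
    (hf_strict : ∀ t : ℝ, t ≠ 1 → 0 < f t)
    (h_int : Integrable (fun x => q x * f (p x / q x)) μ)
    (h_zero : ∫ x, q x * f (p x / q x) ∂μ = 0) :
    p =ᵐ[μ] q := by
  have hf_nonneg : ∀ t : ℝ, 0 ≤ f t := by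
    intro t
    rcases eq_or_ne t 1 with h | h
    · simp [h, hf_one]
    · exact (hf_strict t h).le
  have h_nonneg : 0 ≤ᵐ[μ] fun x => q x * f (p x / q x) := by
    filter_upwards [hq_pos] with x hx
    exact mul_nonneg hx.le (hf_nonneg _)
  have h_ae_zero : (fun x => q x * f (p x / q x)) =ᵐ[μ] 0 :=
    (integral_eq_zero_iff_of_nonneg_ae h_nonneg h_int).mp h_zero
  filter_upwards [hq_pos, h_ae_zero] with x hx hzero
  have hf0 : f (p x / q x) = 0 := by
    have := hzero
    simp only [Pi.zero_apply] at this
    rcases mul_eq_zero.mp this with h | h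
    · exact absurd h hx.ne'
    · exact h
  have hratio : p x / q x = 1 := by
    by_contra h
    exact (hf_strict _ h).ne' hf0
  field_simp at hratio
  exact hratio
end

section
/- The GAN value function V(p,q) = ∫ p·log(2p/(p+q)) dμ + ∫ q·log(2q/(p+q)) dμ equals 2·JSD(p‖q), is nonnegative, and equals 0 if and only if p = q almost everywhere. -/
open MeasureTheory Real

lemma gan_key_ineq {a b : ℝ} (ha : 0 ≤ a) (hb : 0 < b) :
    a - b ≤ a * Real.log (a / b) ∧ (a * Real.log (a / b) = a - b ↔ a = b) := by
  rcases eq_or_lt_of_le ha with h0 | h0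
  · refine ⟨by simp [← h0]; linarith, ?_, ?_⟩
    · intro h; simp [← h0] at h; linarith
    · intro h; exfalso; rw [← h0] at h; linarith
  · have hba : 0 < b / a := div_pos hb h0
    have hlog : Real.log (b / a) ≤ b / a - 1 := Real.log_le_sub_one_of_pos hba
    have hrev : Real.log (a / b) = - Real.log (b / a) := by
      rw [← Real.log_inv, inv_div]
    have hab : a * (b / a) = b := by field_simp
    constructor
    · have := mul_le_mul_of_nonneg_left hlog h0.le
      rw [hrev]; nlinarith
    · constructor
      · intro heq
        by_contra hne
        have hne' : b / a ≠ 1 := by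
          intro h
          exact hne ((div_eq_one_iff_eq h0.ne').mp h).symm
        have hstrict := Real.log_lt_sub_one_of_pos hba hne'
        have := mul_lt_mul_of_pos_left hstrict h0
        rw [hrev] at heq
        nlinarith
      · intro h
        rw [h, div_self hb.ne', Real.log_one]; ring

/-- The GAN value function `V(p,q) = ∫ p log(2p/(p+q)) + ∫ q log(2q/(p+q))`
equals `2·JSD(p‖q)`, is nonnegative, and vanishes iff `p = q` a.e. -/
theorem gan_value_function {χ : Type*} [MeasurableSpace χ] (μ : Measure χ)
    (p q : χ → ℝ)
    (hp_meas : Measurable p) (hq_meas : Measurable q)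
    (hp_nonneg : ∀ x, 0 ≤ p x) (hq_nonneg : ∀ x, 0 ≤ q x)
    (hp_int : Integrable p μ) (hq_int : Integrable q μ)
    (hp_one : ∫ x, p x ∂μ = 1) (hq_one : ∫ x, q x ∂μ = 1)
    (h_pos : ∀ᵐ x ∂μ, 0 < p x + q x)
    (h1 : Integrable (fun x => p x * Real.log (2 * p x / (p x + q x))) μ)
    (h2 : Integrable (fun x => q x * Real.log (2 * q x / (p x + q x))) μ) :
    (∫ x, p x * Real.log (2 * p x / (p x + q x)) ∂μ +
       ∫ x, q x * Real.log (2 * q x / (p x + q x)) ∂μ =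
     2 * ((1 / 2) * ∫ x, p x * Real.log (p x / ((p x + q x) / 2)) ∂μ +
          (1 / 2) * ∫ x, q x * Real.log (q x / ((p x + q x) / 2)) ∂μ)) ∧
    0 ≤ ∫ x, p x * Real.log (2 * p x / (p x + q x)) ∂μ +
        ∫ x, q x * Real.log (2 * q x / (p x + q x)) ∂μ ∧
    ((∫ x, p x * Real.log (2 * p x / (p x + q x)) ∂μ +
        ∫ x, q x * Real.log (2 * q x / (p x + q x)) ∂μ = 0) ↔ p =ᵐ[μ] q) := by
  have e1 : ∀ a c : ℝ, a / (c / 2) = 2 * a / c := by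
    intro a c; rw [div_div_eq_mul_div]; ring
  have hFnn : ∀ᵐ x ∂μ, 0 ≤ p x * Real.log (2 * p x / (p x + q x)) +
      q x * Real.log (2 * q x / (p x + q x)) := by
    filter_upwards [h_pos] with x hx
    have hb : 0 < (p x + q x) / 2 := by linarith
    have k1 := (gan_key_ineq (hp_nonneg x) hb).1
    have k2 := (gan_key_ineq (hq_nonneg x) hb).1
    simp only [e1] at k1 k2
    linarith
  have hzero_iff : (∀ᵐ x ∂μ, p x * Real.log (2 * p x / (p x + q x)) +
      q x * Real.log (2 * q x / (p x + q x)) = 0) ↔ p =ᵐ[μ] q := by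
    constructor
    · intro h
      filter_upwards [h_pos, h] with x hx hFx
      have hb : 0 < (p x + q x) / 2 := by linarith
      have k1 := gan_key_ineq (hp_nonneg x) hb
      have k2 := gan_key_ineq (hq_nonneg x) hb
      simp only [e1] at k1 k2
      have hp1 : p x * Real.log (2 * p x / (p x + q x)) = p x - (p x + q x) / 2 := by
        linarith [k1.1, k2.1]
      have := k1.2.mp hp1
      have hq1 : q x * Real.log (2 * q x / (p x + q x)) = q x - (p x + q x) / 2 := by
        linarith [k1.1, k2.1]
      have := k2.2.mp hq1
      linarith [k1.2.mp hp1, k2.2.mp hq1]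
    · intro h
      filter_upwards [h_pos, h] with x hx hpq
      rw [hpq] at hx ⊢
      have hq0 : 0 < q x := by linarith
      have : 2 * q x / (q x + q x) = 1 := by
        rw [div_eq_one_iff_eq (by linarith)]; ring
      rw [this, Real.log_one]; ring
  refine ⟨?_, ?_, ?_⟩
  · simp_rw [e1]; ring
  · rw [← integral_add h1 h2]
    exact integral_nonneg_of_ae hFnn
  · rw [← integral_add h1 h2,
      integral_eq_zero_iff_of_nonneg_ae hFnn (h1.add h2)]
    constructor
    · intro h
      exact hzero_iff.mp h
    · intro h
      exact hzero_iff.mpr h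
end

section
/- For densities p, q and the optimal discriminator D*(x) = p(x)/(p(x)+q(x)), the value ∫ p·log D* dμ + ∫ q·log(1−D*) dμ equals −2 log 2 + 2·JSD(p‖q); in particular it is minimized exactly when p = q a.e., with minimum value −2 log 2. -/
/-!
Where `p + q > 0`, the value integrands differ from the Jensen–Shannon integrands only by
`p log 2` and `q log 2`, which integrate to `log 2` each; this gives the identity.
Writing `m = (p + q) / 2`, the Jensen–Shannon integrand equals `m (klFun (p/m) + klFun (q/m))`
because `(p - m) + (q - m) = 0`, and `klFun ≥ 0` vanishes only at `1`; hence the divergence is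
nonnegative and vanishes exactly when `p = q` almost everywhere.
-/

open MeasureTheory Real InformationTheory

noncomputable def jsTerm (a b : ℝ) : ℝ :=
  a * log (a / ((a + b) / 2)) + b * log (b / ((a + b) / 2))

lemma mul_log_div_eq_mul_klFun_add_sub (a : ℝ) {m : ℝ} (hm : m ≠ 0) :
    a * log (a / m) = m * klFun (a / m) + (a - m) := by
  rw [klFun_apply]
  field_simp
  ring

lemma jsTerm_eq_mul_klFun_add {a b : ℝ} (hab : a + b ≠ 0) :
    jsTerm a b = (a + b) / 2 * (klFun (a / ((a + b) / 2)) + klFun (b / ((a + b) / 2))) := by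
  have hm : (a + b) / 2 ≠ 0 := div_ne_zero hab two_ne_zero
  rw [jsTerm, mul_log_div_eq_mul_klFun_add_sub a hm, mul_log_div_eq_mul_klFun_add_sub b hm]
  ring

lemma jsTerm_nonneg {a b : ℝ} (ha : 0 ≤ a) (hb : 0 ≤ b) : 0 ≤ jsTerm a b := by
  rcases (add_nonneg ha hb).eq_or_lt with hab | hab
  · simp [jsTerm, ← hab]
  rw [jsTerm_eq_mul_klFun_add hab.ne']
  have hm : 0 < (a + b) / 2 := by positivity
  exact mul_nonneg hm.le
    (add_nonneg (klFun_nonneg (div_nonneg ha hm.le)) (klFun_nonneg (div_nonneg hb hm.le)))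

lemma jsTerm_eq_zero_iff {a b : ℝ} (ha : 0 ≤ a) (hb : 0 ≤ b) (hab : 0 < a + b) :
    jsTerm a b = 0 ↔ a = b := by
  have hm : 0 < (a + b) / 2 := by positivity
  have hka := klFun_nonneg (div_nonneg ha hm.le)
  have hkb := klFun_nonneg (div_nonneg hb hm.le)
  rw [jsTerm_eq_mul_klFun_add hab.ne', mul_eq_zero, or_iff_right hm.ne',
    add_eq_zero_iff_of_nonneg hka hkb, klFun_eq_zero_iff (div_nonneg ha hm.le),
    klFun_eq_zero_iff (div_nonneg hb hm.le), div_eq_one_iff_eq hm.ne',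
    div_eq_one_iff_eq hm.ne']
  constructor
  · rintro ⟨h, -⟩
    linarith
  · rintro rfl
    constructor <;> ring

lemma mul_log_div_half (a : ℝ) {c : ℝ} (hc : c ≠ 0) :
    a * log (a / (c / 2)) = a * log (a / c) + a * log 2 := by
  rcases eq_or_ne a 0 with rfl | ha
  · simp
  rw [div_div_eq_mul_div, mul_div_right_comm, log_mul (div_ne_zero ha hc) two_ne_zero, mul_add]

section Integral

variable {χ : Type*} [MeasurableSpace χ] {μ : Measure χ} {p s : χ → ℝ}

lemma integrable_mul_log_div_half (hp : Integrable p μ) (hs : ∀ᵐ x ∂μ, s x ≠ 0)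
    (h : Integrable (fun x => p x * log (p x / s x)) μ) :
    Integrable (fun x => p x * log (p x / (s x / 2))) μ :=
  (h.add (hp.mul_const (log 2))).congr (hs.mono fun x hx => (mul_log_div_half (p x) hx).symm)

lemma integral_mul_log_div_half (hp : Integrable p μ) (hp_one : ∫ x, p x ∂μ = 1)
    (hs : ∀ᵐ x ∂μ, s x ≠ 0) (h : Integrable (fun x => p x * log (p x / s x)) μ) :
    ∫ x, p x * log (p x / (s x / 2)) ∂μ = ∫ x, p x * log (p x / s x) ∂μ + log 2 := by
  rw [integral_congr_ae (hs.mono fun x hx => mul_log_div_half (p x) hx),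
    integral_add h (hp.mul_const _), integral_mul_const, hp_one, one_mul]

lemma integral_jsTerm_eq_zero_iff {q : χ → ℝ} (hp : ∀ x, 0 ≤ p x) (hq : ∀ x, 0 ≤ q x)
    (h_pos : ∀ᵐ x ∂μ, 0 < p x + q x) (h : Integrable (fun x => jsTerm (p x) (q x)) μ) :
    ∫ x, jsTerm (p x) (q x) ∂μ = 0 ↔ p =ᵐ[μ] q := by
  rw [integral_eq_zero_iff_of_nonneg (fun x => jsTerm_nonneg (hp x) (hq x)) h]
  constructor
  · intro hzero
    filter_upwards [hzero, h_pos] with x hx hx_pos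
    exact (jsTerm_eq_zero_iff (hp x) (hq x) hx_pos).mp hx
  · intro hpq
    filter_upwards [hpq, h_pos] with x hx hx_pos
    exact (jsTerm_eq_zero_iff (hp x) (hq x) hx_pos).mpr hx

end Integral

theorem optimal_discriminator_value_general {χ : Type*} [MeasurableSpace χ] (μ : Measure χ)
    (p q : χ → ℝ)
    (hp_nonneg : ∀ x, 0 ≤ p x) (hq_nonneg : ∀ x, 0 ≤ q x)
    (hp_int : Integrable p μ) (hq_int : Integrable q μ)
    (hp_one : ∫ x, p x ∂μ = 1) (hq_one : ∫ x, q x ∂μ = 1)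
    (h_pos : ∀ᵐ x ∂μ, 0 < p x + q x)
    (h1 : Integrable (fun x => p x * Real.log (p x / (p x + q x))) μ)
    (h2 : Integrable (fun x => q x * Real.log (1 - p x / (p x + q x))) μ) :
    (∫ x, p x * Real.log (p x / (p x + q x)) ∂μ +
       ∫ x, q x * Real.log (1 - p x / (p x + q x)) ∂μ =
     -2 * Real.log 2 +
       2 * ((1 / 2) * ∫ x, p x * Real.log (p x / ((p x + q x) / 2)) ∂μ +
            (1 / 2) * ∫ x, q x * Real.log (q x / ((p x + q x) / 2)) ∂μ)) ∧
    (-2 * Real.log 2 ≤ ∫ x, p x * Real.log (p x / (p x + q x)) ∂μ +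
        ∫ x, q x * Real.log (1 - p x / (p x + q x)) ∂μ) ∧
    ((∫ x, p x * Real.log (p x / (p x + q x)) ∂μ +
        ∫ x, q x * Real.log (1 - p x / (p x + q x)) ∂μ = -2 * Real.log 2) ↔
      p =ᵐ[μ] q) := by
  have hs : ∀ᵐ x ∂μ, p x + q x ≠ 0 := h_pos.mono fun _ hx => hx.ne'
  have h_one_sub : (fun x => q x * log (1 - p x / (p x + q x))) =ᵐ[μ]
      fun x => q x * log (q x / (p x + q x)) :=
    hs.mono fun x hx => by simp only [one_sub_div hx, add_sub_cancel_left]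
  have h2' := h2.congr h_one_sub
  rw [integral_congr_ae h_one_sub]
  have hI1 := integral_mul_log_div_half hp_int hp_one hs h1
  have hI2 := integral_mul_log_div_half hq_int hq_one hs h2'
  have hg1 := integrable_mul_log_div_half hp_int hs h1
  have hg2 := integrable_mul_log_div_half hq_int hs h2'
  have hJ : ∫ x, jsTerm (p x) (q x) ∂μ = ∫ x, p x * log (p x / ((p x + q x) / 2)) ∂μ +
      ∫ x, q x * log (q x / ((p x + q x) / 2)) ∂μ :=
    integral_add hg1 hg2
  have hJ_nonneg : 0 ≤ ∫ x, jsTerm (p x) (q x) ∂μ :=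
    integral_nonneg fun x => jsTerm_nonneg (hp_nonneg x) (hq_nonneg x)
  refine ⟨by linarith, by linarith, ?_⟩
  rw [← integral_jsTerm_eq_zero_iff hp_nonneg hq_nonneg h_pos (hg1.add hg2)]
  constructor <;> intro h <;> linarith

/-- For the optimal discriminator `D* = p/(p+q)`, the GAN value
`∫ p log D* + ∫ q log (1 - D*)` equals `-2 log 2 + 2·JSD(p‖q)`; in particular
it is minimized exactly when `p = q` a.e., with minimum value `-2 log 2`. -/
theorem optimal_discriminator_value {χ : Type*} [MeasurableSpace χ] (μ : Measure χ)
    (p q : χ → ℝ)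
    (hp_meas : Measurable p) (hq_meas : Measurable q)
    (hp_nonneg : ∀ x, 0 ≤ p x) (hq_nonneg : ∀ x, 0 ≤ q x)
    (hp_int : Integrable p μ) (hq_int : Integrable q μ)
    (hp_one : ∫ x, p x ∂μ = 1) (hq_one : ∫ x, q x ∂μ = 1)
    (h_pos : ∀ᵐ x ∂μ, 0 < p x + q x)
    (h1 : Integrable (fun x => p x * Real.log (p x / (p x + q x))) μ)
    (h2 : Integrable (fun x => q x * Real.log (1 - p x / (p x + q x))) μ) :
    (∫ x, p x * Real.log (p x / (p x + q x)) ∂μ +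
       ∫ x, q x * Real.log (1 - p x / (p x + q x)) ∂μ =
     -2 * Real.log 2 +
       2 * ((1 / 2) * ∫ x, p x * Real.log (p x / ((p x + q x) / 2)) ∂μ +
            (1 / 2) * ∫ x, q x * Real.log (q x / ((p x + q x) / 2)) ∂μ)) ∧
    (-2 * Real.log 2 ≤ ∫ x, p x * Real.log (p x / (p x + q x)) ∂μ +
        ∫ x, q x * Real.log (1 - p x / (p x + q x)) ∂μ) ∧
    ((∫ x, p x * Real.log (p x / (p x + q x)) ∂μ +
        ∫ x, q x * Real.log (1 - p x / (p x + q x)) ∂μ = -2 * Real.log 2) ↔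
      p =ᵐ[μ] q) :=
  optimal_discriminator_value_general μ p q hp_nonneg hq_nonneg hp_int hq_int hp_one hq_one h_pos h1
    h2
end
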